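/- For every positive integer a, Σ_{k=0}^{7^a-1} (-5)^k·C(2k,k) ≡ 7^a (mod 7^{a+1}). -/

import Mathlib

/-!
Put `c = 4x - 1`. Expanding `(4x)^k = (1 + c)^k` binomially gives
`4^N ∑_{k<N} x^k C(2k,k) = ∑_{j<N} c^j T(N,j)` with `T(N,j) = ∑_{k<N} 4^(N-k) C(2k,k) C(k,j)`,
and `T` has the closed form `(2j+1) T(N,j) = 2N C(2N,N) C(N-1,j)`. For `N = p^a` and `p ∣ c`,
`(2j+1) c^j T(N,j)` is divisible by `p^(a+j)`, while `2j+1 < p^j` for `j ≥ 1` when `p ≥ 5`;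
so modulo `p^(a+1)` only `T(N,0) = 2 p^a C(2p^a,p^a)` survives. By Lucas
`C(2p^a,p^a) ≡ 2` and by Fermat `4^(p^a) ≡ 4 (mod p)`, so the sum times `4^N` is `≡ 4^N p^a`,
and `4^N` is prime to `p`.
-/

open Finset Nat

def centralBinomChooseSum (N j : ℕ) : ℕ :=
  ∑ k ∈ range N, 4 ^ (N - k) * centralBinom k * k.choose j

lemma mul_choose_sub_one_add_mul_choose (n j : ℕ) :
    n * (n - 1).choose j + j * n.choose j = n * n.choose j := by
  rcases n with _ | m
  · cases j <;> simp
  rcases j with _ | i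
  · simp
  rw [Nat.add_sub_cancel, mul_comm (i + 1), ← add_one_mul_choose_eq m i, choose_succ_succ' m i]
  ring

lemma centralBinomChooseSum_succ (n j : ℕ) :
    centralBinomChooseSum (n + 1) j =
      4 * centralBinomChooseSum n j + 4 * centralBinom n * n.choose j := by
  rw [centralBinomChooseSum, centralBinomChooseSum, sum_range_succ, mul_sum,
    add_tsub_cancel_left, pow_one]
  congr 1
  refine sum_congr rfl fun k hk => ?_
  rw [Nat.sub_add_comm (mem_range.1 hk).le, pow_succ]
  ring

lemma two_mul_add_one_mul_centralBinomChooseSum (N j : ℕ) :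
    (2 * j + 1) * centralBinomChooseSum N j = 2 * N * centralBinom N * (N - 1).choose j := by
  induction N with
  | zero => simp [centralBinomChooseSum]
  | succ n ih =>
    have hchoose := mul_choose_sub_one_add_mul_choose n j
    have hcentral := succ_mul_centralBinom_succ n
    rw [centralBinomChooseSum_succ, add_tsub_cancel_right]
    calc (2 * j + 1) * (4 * centralBinomChooseSum n j + 4 * centralBinom n * n.choose j)
        = 4 * centralBinom n * (2 * (n * (n - 1).choose j + j * n.choose j) + n.choose j) := by
          rw [mul_add, mul_left_comm, ih]; ring
      _ = 2 * ((n + 1) * centralBinom (n + 1)) * n.choose j := by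
          rw [hchoose, hcentral]; ring
      _ = _ := by ring

lemma centralBinomChooseSum_zero_right (N : ℕ) :
    centralBinomChooseSum N 0 = 2 * N * centralBinom N := by
  simpa using two_mul_add_one_mul_centralBinomChooseSum N 0

lemma add_pow_eq_sum_range_mul_choose {R : Type*} [CommSemiring R] (y : R) {k N : ℕ}
    (hk : k < N) : (y + 1) ^ k = ∑ j ∈ range N, y ^ j * k.choose j := by
  rw [add_pow]
  refine sum_subset (range_subset_range.2 hk) (fun j _ hj => ?_) |>.trans ?_
  · rw [choose_eq_zero_of_lt (by simpa using hj)]; simp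
  · simp

lemma four_pow_mul_sum_range_pow_mul_centralBinom {R : Type*} [CommRing R] (x : R) (N : ℕ) :
    4 ^ N * ∑ k ∈ range N, x ^ k * centralBinom k =
      ∑ j ∈ range N, (4 * x - 1) ^ j * centralBinomChooseSum N j := by
  simp only [centralBinomChooseSum, Nat.cast_sum, Nat.cast_mul, Nat.cast_pow, mul_sum]
  rw [sum_comm]
  refine sum_congr rfl fun k hk => ?_
  have hk := mem_range.1 hk
  calc 4 ^ N * (x ^ k * centralBinom k)
      = 4 ^ (N - k) * centralBinom k * ((4 * x - 1) + 1) ^ k := by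
        rw [sub_add_cancel, mul_pow, ← Nat.sub_add_cancel hk.le, pow_add, Nat.add_sub_cancel]
        ring
    _ = _ := by
        rw [add_pow_eq_sum_range_mul_choose _ hk, mul_sum]
        refine sum_congr rfl fun j _ => ?_
        push_cast
        ring

lemma Int.pow_succ_dvd_of_pow_add_dvd_mul {p : ℕ} [Fact p.Prime] {a j : ℕ} {n y : ℤ}
    (hn : ¬ (p : ℤ) ^ j ∣ n) (h : (p : ℤ) ^ (a + j) ∣ n * y) : (p : ℤ) ^ (a + 1) ∣ y := by
  rcases eq_or_ne y 0 with rfl | hy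
  · exact dvd_zero _
  have hn0 : n ≠ 0 := by rintro rfl; exact hn (dvd_zero _)
  have hv := ((padicValInt_dvd_iff _ _).1 h).resolve_left (mul_ne_zero hn0 hy)
  rw [padicValInt.mul hn0 hy] at hv
  rw [padicValInt_dvd_iff, not_or] at hn
  rw [padicValInt_dvd_iff]
  omega

lemma two_mul_add_one_lt_pow {p j : ℕ} (hp : 5 ≤ p) (hj : j ≠ 0) : 2 * j + 1 < p ^ j :=
  calc 2 * j + 1 < 1 + j * 4 := by omega
    _ ≤ (1 + 4) ^ j :=
      one_add_mul_le_pow_of_sq_nonneg (by positivity) (by positivity) (by norm_num) j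
    _ ≤ p ^ j := Nat.pow_le_pow_left hp j

lemma centralBinom_prime_pow_modEq_two {p : ℕ} [Fact p.Prime] (a : ℕ) :
    (centralBinom (p ^ a) : ℤ) ≡ 2 [ZMOD p] := by
  simpa [centralBinom_eq_two_mul_choose, mul_comm 2] using
    Choose.choose_pow_mul_pow_mul_modEq_choose (p := p) (k := a) (a := 2) (b := 1)

lemma Int.pow_prime_pow_modEq_self {p : ℕ} [Fact p.Prime] (b : ℤ) (a : ℕ) :
    b ^ p ^ a ≡ b [ZMOD p] := by
  rw [← ZMod.intCast_eq_intCast_iff]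
  push_cast
  exact ZMod.pow_card_pow _

lemma Int.ModEq.cancel_left_of_isCoprime {m c a b : ℤ} (hmc : IsCoprime m c)
    (h : c * a ≡ c * b [ZMOD m]) : a ≡ b [ZMOD m] :=
  Int.modEq_iff_dvd.2 <| hmc.dvd_of_dvd_mul_left <| by rw [mul_sub]; exact Int.modEq_iff_dvd.1 h

lemma pow_succ_dvd_mul_centralBinomChooseSum {p : ℕ} [Fact p.Prime] (hp : 5 ≤ p) {c : ℤ}
    (hc : (p : ℤ) ∣ c) (a : ℕ) {j : ℕ} (hj : j ≠ 0) :
    (p : ℤ) ^ (a + 1) ∣ c ^ j * centralBinomChooseSum (p ^ a) j := by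
  have hlt : ((2 * j + 1 : ℕ) : ℤ) < (p : ℤ) ^ j := by exact_mod_cast two_mul_add_one_lt_pow hp hj
  refine Int.pow_succ_dvd_of_pow_add_dvd_mul (n := (2 * j + 1 : ℕ))
    (fun h => (Int.le_of_dvd (by positivity) h).not_gt hlt) ?_
  have hfactor : ((2 * j + 1 : ℕ) : ℤ) * (c ^ j * centralBinomChooseSum (p ^ a) j) =
      c ^ j * (p : ℤ) ^ a * (2 * centralBinom (p ^ a) * (p ^ a - 1).choose j) := by
    rw [mul_left_comm, ← Nat.cast_mul, two_mul_add_one_mul_centralBinomChooseSum]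
    push_cast
    ring
  rw [hfactor, add_comm a j, pow_add]
  exact (mul_dvd_mul (pow_dvd_pow_of_dvd hc j) dvd_rfl).mul_right _

theorem sum_range_prime_pow_pow_mul_centralBinom_modEq {p : ℕ} [Fact p.Prime] (hp : 5 ≤ p)
    {x : ℤ} (hx : (p : ℤ) ∣ 4 * x - 1) (a : ℕ) :
    ∑ k ∈ range (p ^ a), x ^ k * (centralBinom k : ℤ) ≡ (p : ℤ) ^ a [ZMOD (p : ℤ) ^ (a + 1)] := by
  have hsum : 4 ^ p ^ a * ∑ k ∈ range (p ^ a), x ^ k * (centralBinom k : ℤ) ≡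
      centralBinomChooseSum (p ^ a) 0 [ZMOD (p : ℤ) ^ (a + 1)] := by
    have h0 : 0 ∈ range (p ^ a) := mem_range.2 (pow_pos (Fact.out : p.Prime).pos a)
    have hrest : (p : ℤ) ^ (a + 1) ∣
        ∑ j ∈ (range (p ^ a)).erase 0, (4 * x - 1) ^ j * centralBinomChooseSum (p ^ a) j :=
      dvd_sum fun j hj => pow_succ_dvd_mul_centralBinomChooseSum hp hx a (ne_of_mem_erase hj)
    rw [four_pow_mul_sum_range_pow_mul_centralBinom, ← add_sum_erase _ _ h0]
    simpa using (Int.modEq_zero_iff_dvd.2 hrest).add_left (centralBinomChooseSum (p ^ a) 0 : ℤ)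
  have hT₀ : (centralBinomChooseSum (p ^ a) 0 : ℤ) ≡ 4 ^ p ^ a * (p : ℤ) ^ a
      [ZMOD (p : ℤ) ^ (a + 1)] := by
    have h2 : 2 * (centralBinom (p ^ a) : ℤ) ≡ 4 ^ p ^ a [ZMOD p] :=
      ((centralBinom_prime_pow_modEq_two a).mul_left 2).trans
        (Int.pow_prime_pow_modEq_self 4 a).symm
    rw [centralBinomChooseSum_zero_right, pow_succ, mul_comm (4 ^ p ^ a)]
    push_cast
    rw [mul_assoc, mul_left_comm]
    exact h2.mul_left'
  have hcop : IsCoprime ((p : ℤ) ^ (a + 1)) (4 ^ p ^ a) := by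
    have hp4 : Nat.Coprime p 4 := (Nat.Prime.coprime_iff_not_dvd Fact.out).2 fun h =>
      absurd (Nat.le_of_dvd (by norm_num) h) (by omega)
    exact IsCoprime.pow (by exact_mod_cast Nat.isCoprime_iff_coprime.2 hp4)
  exact Int.ModEq.cancel_left_of_isCoprime hcop (hsum.trans hT₀)

theorem stmt_9_general (a : ℕ) :
    (∑ k ∈ Finset.range (7 ^ a), (-5 : ℤ) ^ k * (Nat.choose (2 * k) k : ℤ))
      ≡ (7 : ℤ) ^ a [ZMOD (7 : ℤ) ^ (a + 1)] := by
  have : Fact (Nat.Prime 7) := ⟨by norm_num⟩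
  simpa [centralBinom_eq_two_mul_choose] using
    sum_range_prime_pow_pow_mul_centralBinom_modEq (p := 7) (by norm_num) (x := -5) (by norm_num) a

theorem stmt_9 (a : ℕ) (ha : 0 < a) :
    (∑ k ∈ Finset.range (7 ^ a), (-5 : ℤ) ^ k * (Nat.choose (2 * k) k : ℤ))
      ≡ (7 : ℤ) ^ a [ZMOD (7 : ℤ) ^ (a + 1)] :=
  stmt_9_general a
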